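/- Let 𝓛 be an even mixed form of codegree k and additional degree r on an open set U ⊆ ℝⁿ, and let Δ𝓛 be its differential, Δ𝓛(x, p, ŵ) := (−1)^r Σ_{K=1}^{k} Σ_{A=1}^{n} w'^K (∂²𝓛/∂x^A∂p_A^K)(x, p, w), where ŵ ∈ Matrix((r+1)×k, ℝ) has first r rows w and last row w'. Then Δ𝓛 is admissible: Δ𝓛(x, p + a·ŵ, ŵ) = Δ𝓛(x, p, ŵ) for all x, p, ŵ and all a ∈ Matrix(n×(r+1), ℝ). -/

import Mathlib

open MeasureTheory
open scoped BigOperators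

noncomputable section

/-- Product of matrices given as functions (entry `(i,k)` is `∑ j, M i j * N j k`). -/
def mmul {a b c : ℕ} (M : Fin a → Fin b → ℝ) (N : Fin b → Fin c → ℝ) :
    Fin a → Fin c → ℝ :=
  fun i k => ∑ j, M i j * N j k

/-- Determinant of a square matrix given as a function. -/
def fdet {a : ℕ} (M : Fin a → Fin a → ℝ) : ℝ :=
  Matrix.det (Matrix.of M)

/-- Partial derivative of a function of a matrix with respect to the `(i,j)` entry. -/
def pdM {a b : ℕ} (L : (Fin a → Fin b → ℝ) → ℝ) (i : Fin a) (j : Fin b)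
    (m : Fin a → Fin b → ℝ) : ℝ :=
  deriv (fun t : ℝ => L (fun i' j' => m i' j' + (if i' = i ∧ j' = j then t else 0))) 0

/-- Partial derivative of a function of a vector with respect to the `i`-th coordinate. -/
def pdV {a : ℕ} (f : (Fin a → ℝ) → ℝ) (i : Fin a) (x : Fin a → ℝ) : ℝ :=
  deriv (fun t : ℝ => f (fun i' => x i' + (if i' = i then t else 0))) 0

/-- The fundamental equations for a function of an `a × b` matrix:
for all rows `i₁, i₂` and columns `j₁, j₂`,
`∂²L/∂m_{i₁}^{j₁}∂m_{i₂}^{j₂} + ∂²L/∂m_{i₂}^{j₁}∂m_{i₁}^{j₂} = 0`. -/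
def FundEqs {a b : ℕ} (L : (Fin a → Fin b → ℝ) → ℝ) : Prop :=
  ∀ (i₁ i₂ : Fin a) (j₁ j₂ : Fin b) (m : Fin a → Fin b → ℝ),
    pdM (fun m' => pdM L i₂ j₂ m') i₁ j₁ m + pdM (fun m' => pdM L i₁ j₂ m') i₂ j₁ m = 0

/-- The velocity matrix of a path `γ`: `(vel γ t) F A = ∂γ^A/∂t^F (t)`. -/
def vel {r n : ℕ} (γ : (Fin r → ℝ) → (Fin n → ℝ)) (t : Fin r → ℝ) :
    Fin r → Fin n → ℝ :=
  fun F A => pdV (fun s => γ s A) F t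

/-- The matrix of gradients of a copath `f`: `(grad f x) A K = ∂f^K/∂x^A (x)`. -/
def grad {n k : ℕ} (f : (Fin n → ℝ) → (Fin k → ℝ)) (x : Fin n → ℝ) :
    Fin n → Fin k → ℝ :=
  fun A K => pdV (fun y => f y K) A x

/-- An even `r`-form on an open set `U ⊆ ℝⁿ`: a smooth function `L(x, ẋ)` of a point
`x` and an `r × n` matrix `ẋ` which is covariant (`L(x, h·ẋ) = det h · L(x, ẋ)` for
invertible `h`) and satisfies the fundamental equations in the entries of `ẋ`. -/
def IsEvenForm {n r : ℕ} (U : Set (Fin n → ℝ))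
    (L : (Fin n → ℝ) → (Fin r → Fin n → ℝ) → ℝ) : Prop :=
  ContDiffOn ℝ (⊤ : ℕ∞)
      (fun q : (Fin n → ℝ) × (Fin r → Fin n → ℝ) => L q.1 q.2)
      (U ×ˢ (Set.univ : Set (Fin r → Fin n → ℝ))) ∧
  (∀ x ∈ U, ∀ (xdot : Fin r → Fin n → ℝ) (h : Fin r → Fin r → ℝ), fdet h ≠ 0 →
    L x (mmul h xdot) = fdet h * L x xdot) ∧
  (∀ x ∈ U, FundEqs (L x))

/-- The differential of a Lagrangian of paths `L(x, ẋ)`: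
`ΔL(x, (ẋ; ẏ)) = (−1)^r Σ_A ẏ^A (∂L/∂x^A − Σ_{F,B} ẋ_F^B ∂²L/∂x^B∂ẋ_F^A)`,
where `ẋ` consists of the first `r` rows and `ẏ` is the last row of the argument. -/
def Dform {n r : ℕ} (L : (Fin n → ℝ) → (Fin r → Fin n → ℝ) → ℝ) :
    (Fin n → ℝ) → (Fin (r + 1) → Fin n → ℝ) → ℝ :=
  fun x M => (-1 : ℝ) ^ r * ∑ A, M (Fin.last r) A *
    (pdV (fun x' => L x' (fun F => M (Fin.castSucc F))) A x
      - ∑ F, ∑ B, M (Fin.castSucc F) B *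
          pdV (fun x' => pdM (L x') F A (fun G => M (Fin.castSucc G))) B x)

/-- An even mixed form of codegree `k` and additional degree `r` on an open set
`U ⊆ ℝⁿ`: a smooth function `𝓛(x, p, w)` which is right-covariant, left-covariant,
admissible, and satisfies the fundamental equations in the entries of the stacked
`(n+r) × k` matrix (`p` over `w`). -/
def IsMixedForm {n k r : ℕ} (U : Set (Fin n → ℝ))
    (L : (Fin n → ℝ) → (Fin n → Fin k → ℝ) → (Fin r → Fin k → ℝ) → ℝ) : Prop :=
  ContDiffOn ℝ (⊤ : ℕ∞)
      (fun q : (Fin n → ℝ) × (Fin n → Fin k → ℝ) × (Fin r → Fin k → ℝ) =>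
        L q.1 q.2.1 q.2.2)
      (U ×ˢ (Set.univ : Set ((Fin n → Fin k → ℝ) × (Fin r → Fin k → ℝ)))) ∧
  (∀ x ∈ U, ∀ (p : Fin n → Fin k → ℝ) (w : Fin r → Fin k → ℝ) (g : Fin k → Fin k → ℝ),
    fdet g ≠ 0 → L x (mmul p g) (mmul w g) = fdet g * L x p w) ∧
  (∀ x ∈ U, ∀ (p : Fin n → Fin k → ℝ) (w : Fin r → Fin k → ℝ) (h : Fin r → Fin r → ℝ),
    fdet h ≠ 0 → L x p (mmul h w) = fdet h * L x p w) ∧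
  (∀ x ∈ U, ∀ (p : Fin n → Fin k → ℝ) (w : Fin r → Fin k → ℝ) (a : Fin n → Fin r → ℝ),
    L x (p + mmul a w) w = L x p w) ∧
  (∀ x ∈ U, FundEqs (fun m : Fin (n + r) → Fin k → ℝ =>
    L x (fun A => m (Fin.castAdd r A)) (fun F => m (Fin.natAdd n F))))

/-- The differential of a mixed Lagrangian `𝓛(x, p, w)`:
`Δ𝓛(x, p, ŵ) = (−1)^r Σ_{K,A} w'^K ∂²𝓛/∂x^A∂p_A^K (x, p, w)`, where `ŵ` has first
`r` rows `w` and last row `w'`. -/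
def Dmix {n k r : ℕ}
    (L : (Fin n → ℝ) → (Fin n → Fin k → ℝ) → (Fin r → Fin k → ℝ) → ℝ) :
    (Fin n → ℝ) → (Fin n → Fin k → ℝ) → (Fin (r + 1) → Fin k → ℝ) → ℝ :=
  fun x p what => (-1 : ℝ) ^ r * ∑ K, ∑ A, what (Fin.last r) K *
    pdV (fun x' => pdM (fun p' => L x' p' (fun F => what (Fin.castSucc F))) A K p) A x

/-- An even dual form of codegree `k` on an open set `U ⊆ ℝⁿ`: a smooth function
`𝓛(x, p)` of a point `x` and an `n × k` matrix `p` of momenta which is covariant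
(`𝓛(x, p·g) = det g · 𝓛(x, p)` for invertible `g`) and satisfies the fundamental
equations in the entries of `p`. -/
def IsDualForm {n k : ℕ} (U : Set (Fin n → ℝ))
    (L : (Fin n → ℝ) → (Fin n → Fin k → ℝ) → ℝ) : Prop :=
  ContDiffOn ℝ (⊤ : ℕ∞)
      (fun q : (Fin n → ℝ) × (Fin n → Fin k → ℝ) => L q.1 q.2)
      (U ×ˢ (Set.univ : Set (Fin n → Fin k → ℝ))) ∧
  (∀ x ∈ U, ∀ (p : Fin n → Fin k → ℝ) (g : Fin k → Fin k → ℝ), fdet g ≠ 0 →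
    L x (mmul p g) = fdet g * L x p) ∧
  (∀ x ∈ U, FundEqs (L x))

/-- The identity matrix as a function. -/
def idm (n : ℕ) : Fin n → Fin n → ℝ := fun i j => if i = j then 1 else 0

/-!
Split the shift as `a·ŵ = a_last ⊗ w' + a'·w`, where `a'` is formed by the first `r` columns of
`a`. Admissibility of `𝓛` makes `∂𝓛/∂p` invariant under `p ↦ p + a'·w`. For the rank-one part,
the derivative of `s ↦ ∑_K w'^K ∂𝓛/∂p_A^K (x, p + s a_last ⊗ w', w)` is
`∑_{B,K,M} a_last^B w'^K w'^M ∂²𝓛/∂p_B^M∂p_A^K`, which vanishes because the fundamental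
equations together with the symmetry of second derivatives make the summand antisymmetric in
`K, M`. Hence `∑_K w'^K ∂𝓛/∂p_A^K` is unchanged at every point of the open set `U`, and so is
its `x^A`-derivative.
-/
open Topology

def unitMat {a b : ℕ} (i : Fin a) (j : Fin b) : Fin a → Fin b → ℝ :=
  Pi.single i (Pi.single j 1)

section PartialDerivatives

variable {a b : ℕ}

lemma pdV_eq_lineDeriv (f : (Fin a → ℝ) → ℝ) (i : Fin a) (x : Fin a → ℝ) :
    pdV f i x = lineDeriv ℝ f x (Pi.single i 1) := by
  unfold pdV lineDeriv
  congr! with t i'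
  simp [Pi.single_apply]

lemma pdM_eq_lineDeriv (f : (Fin a → Fin b → ℝ) → ℝ) (i : Fin a) (j : Fin b)
    (m : Fin a → Fin b → ℝ) :
    pdM f i j m = lineDeriv ℝ f m (unitMat i j) := by
  unfold pdM lineDeriv unitMat
  congr! 2 with t
  congr 1
  funext i' j'
  by_cases hi : i' = i <;> by_cases hj : j' = j <;> simp [hi, hj]

lemma HasFDerivAt.pdV_eq {f : (Fin a → ℝ) → ℝ} {f' : (Fin a → ℝ) →L[ℝ] ℝ} {x : Fin a → ℝ}
    (hf : HasFDerivAt f f' x) (i : Fin a) : pdV f i x = f' (Pi.single i 1) := by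
  rw [pdV_eq_lineDeriv, (hf.hasLineDerivAt _).lineDeriv]

lemma HasFDerivAt.pdM_eq {f : (Fin a → Fin b → ℝ) → ℝ} {f' : (Fin a → Fin b → ℝ) →L[ℝ] ℝ}
    {m : Fin a → Fin b → ℝ} (hf : HasFDerivAt f f' m) (i : Fin a) (j : Fin b) :
    pdM f i j m = f' (unitMat i j) := by
  rw [pdM_eq_lineDeriv, (hf.hasLineDerivAt _).lineDeriv]

lemma pdM_eq_fderiv {f : (Fin a → Fin b → ℝ) → ℝ} {m : Fin a → Fin b → ℝ}
    (hf : DifferentiableAt ℝ f m) (i : Fin a) (j : Fin b) :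
    pdM f i j m = fderiv ℝ f m (unitMat i j) :=
  hf.hasFDerivAt.pdM_eq i j

lemma Filter.EventuallyEq.pdV_eq {f g : (Fin a → ℝ) → ℝ} {x : Fin a → ℝ} (h : f =ᶠ[𝓝 x] g)
    (i : Fin a) : pdV f i x = pdV g i x := by
  rw [pdV_eq_lineDeriv, pdV_eq_lineDeriv, h.lineDeriv_eq]

lemma pdV_sum_mul {ι : Type*} (s : Finset ι) (c : ι → ℝ) {f : ι → (Fin a → ℝ) → ℝ}
    {x : Fin a → ℝ} (hf : ∀ K ∈ s, DifferentiableAt ℝ (f K) x) (i : Fin a) :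
    pdV (fun y => ∑ K ∈ s, c K * f K y) i x = ∑ K ∈ s, c K * pdV (f K) i x := by
  have hsum := HasFDerivAt.fun_sum fun K hK => ((hf K hK).hasFDerivAt).const_mul (c K)
  rw [hsum.pdV_eq, FunLike.coe_sum, Finset.sum_apply]
  exact Finset.sum_congr rfl fun K hK => by simp [(hf K hK).hasFDerivAt.pdV_eq]

lemma pdM_add_of_forall_add_eq {f : (Fin a → Fin b → ℝ) → ℝ} {v : Fin a → Fin b → ℝ}
    (hf : ∀ q, f (q + v) = f q) (i : Fin a) (j : Fin b) (m : Fin a → Fin b → ℝ) :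
    pdM f i j (m + v) = pdM f i j m := by
  simp only [pdM_eq_lineDeriv, lineDeriv, add_right_comm m v, hf]

end PartialDerivatives

section Append

variable {n r k : ℕ}

lemma pdM_comp_append (F : (Fin (n + r) → Fin k → ℝ) → ℝ) (w : Fin r → Fin k → ℝ)
    (A : Fin n) (K : Fin k) (q : Fin n → Fin k → ℝ) :
    pdM (fun q' => F (Fin.append q' w)) A K q = pdM F (Fin.castAdd r A) K (Fin.append q w) := by
  unfold pdM
  congr! 2 with t
  dsimp only
  congr 1
  funext i j
  refine Fin.addCases (fun B => ?_) (fun G => ?_) i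
  · simp [Fin.append_left]
  · simp [Fin.append_right, Fin.ext_iff]
    omega

lemma FundEqs.comp_append {F : (Fin (n + r) → Fin k → ℝ) → ℝ} (hF : FundEqs F)
    (w : Fin r → Fin k → ℝ) : FundEqs (fun q => F (Fin.append q w)) := by
  intro i₁ i₂ j₁ j₂ m
  simp only [pdM_comp_append]
  exact hF _ _ j₁ j₂ _

end Append

lemma sum_sum_eq_zero_of_antisymm {ι : Type*} (s : Finset ι) (f : ι → ι → ℝ)
    (hf : ∀ i j, f i j = -f j i) : ∑ i ∈ s, ∑ j ∈ s, f i j = 0 := by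
  have h : ∑ i ∈ s, ∑ j ∈ s, f i j = -∑ i ∈ s, ∑ j ∈ s, f i j := by
    conv_lhs => rw [Finset.sum_comm]
    simp only [← Finset.sum_neg_distrib]
    exact Finset.sum_congr rfl fun i _ => Finset.sum_congr rfl fun j _ => hf j i
  linarith

lemma eq_sum_smul_unitMat {a b : ℕ} (v : Fin a → Fin b → ℝ) :
    v = ∑ B, ∑ M, v B M • unitMat B M := by
  ext i j
  simp [unitMat, Finset.sum_apply, Pi.single_apply, ite_apply]

section Hessian

variable {d k : ℕ} {G : (Fin d → Fin k → ℝ) → ℝ}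

lemma pdM_pdM_eq_fderiv_fderiv (hG : ContDiff ℝ 2 G) (A B : Fin d) (K M : Fin k)
    (q : Fin d → Fin k → ℝ) :
    pdM (fun q' => pdM G A K q') B M q = fderiv ℝ (fderiv ℝ G) q (unitMat B M) (unitMat A K) := by
  have hG' : Differentiable ℝ (fderiv ℝ G) :=
    (hG.fderiv_right (m := 1) le_rfl).differentiable one_ne_zero
  have h : (fun q' => pdM G A K q') = fun q' => fderiv ℝ G q' (unitMat A K) :=
    funext fun q' => pdM_eq_fderiv ((hG.differentiable two_ne_zero) q') A K
  rw [h, (((hG' q).hasFDerivAt).clm_apply (hasFDerivAt_const _ _)).pdM_eq]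
  simp

lemma FundEqs.fderiv_fderiv_antisymm (hG : ContDiff ℝ 2 G) (hF : FundEqs G) (A B : Fin d)
    (K M : Fin k) (q : Fin d → Fin k → ℝ) :
    fderiv ℝ (fderiv ℝ G) q (unitMat B M) (unitMat A K) =
      -fderiv ℝ (fderiv ℝ G) q (unitMat B K) (unitMat A M) := by
  have hsymm := (hG.contDiffAt (x := q)).isSymmSndFDerivAt (by simp) (unitMat A M) (unitMat B K)
  have h := hF B A M K q
  rw [pdM_pdM_eq_fderiv_fderiv hG, pdM_pdM_eq_fderiv_fderiv hG] at h
  linarith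

/-- The left side is the Hessian on the rank-one pair `c ⊗ w`, `e_A ⊗ w`: the fundamental equations
make it antisymmetric in the two column indices. -/
lemma FundEqs.sum_fderiv_fderiv_rankOne (hG : ContDiff ℝ 2 G) (hF : FundEqs G) (A : Fin d)
    (c : Fin d → ℝ) (w : Fin k → ℝ) (q : Fin d → Fin k → ℝ) :
    ∑ K, w K * fderiv ℝ (fderiv ℝ G) q (fun B M => c B * w M) (unitMat A K) = 0 := by
  rw [eq_sum_smul_unitMat (fun B M => c B * w M)]
  simp only [map_sum, map_smul, FunLike.coe_sum, Finset.sum_apply,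
    FunLike.coe_smul, Pi.smul_apply, smul_eq_mul, Finset.mul_sum]
  rw [Finset.sum_comm]
  refine Finset.sum_eq_zero fun B _ => sum_sum_eq_zero_of_antisymm _ _ fun K M => ?_
  rw [hF.fderiv_fderiv_antisymm hG A B K M]
  ring

end Hessian

lemma FundEqs.sum_pdM_add_rankOne {d k : ℕ} {G : (Fin d → Fin k → ℝ) → ℝ}
    (hG : ContDiff ℝ 2 G) (hF : FundEqs G) (A : Fin d) (c : Fin d → ℝ) (w : Fin k → ℝ)
    (p : Fin d → Fin k → ℝ) :
    ∑ K, w K * pdM G A K (p + fun B M => c B * w M) = ∑ K, w K * pdM G A K p := by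
  set v : Fin d → Fin k → ℝ := fun B M => c B * w M
  have hG' : Differentiable ℝ (fderiv ℝ G) :=
    (hG.fderiv_right (m := 1) le_rfl).differentiable one_ne_zero
  have hpdM : ∀ K q, pdM G A K q = fderiv ℝ G q (unitMat A K) := fun K q =>
    pdM_eq_fderiv ((hG.differentiable two_ne_zero) q) A K
  set h : ℝ → ℝ := fun s => ∑ K, w K * fderiv ℝ G (p + s • v) (unitMat A K)
  have hline : ∀ s : ℝ, HasDerivAt (fun s : ℝ => p + s • v) v s := fun s => by
    simpa using ((hasDerivAt_id s).smul_const v).const_add p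
  have hderiv : ∀ s, HasDerivAt h 0 s := fun s => by
    rw [← hF.sum_fderiv_fderiv_rankOne hG A c w (p + s • v)]
    refine HasDerivAt.fun_sum fun K _ => HasDerivAt.const_mul (w K) ?_
    exact ((hG' _).hasFDerivAt.comp_hasDerivAt s (hline s)).clm_apply (hasDerivAt_const s _)
      |>.congr_deriv (by simp [v])
  have hconst : h 1 = h 0 :=
    is_const_of_deriv_eq_zero (fun s => (hderiv s).differentiableAt)
      (fun s => (hderiv s).deriv) 1 0
  simpa [h, hpdM] using hconst

section Slices

variable {n a b : ℕ} {U : Set (Fin n → ℝ)} {Φ : (Fin n → ℝ) × (Fin a → Fin b → ℝ) → ℝ}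

lemma ContDiffOn.contDiff_slice (hΦ : ContDiffOn ℝ 2 Φ (U ×ˢ Set.univ)) {x : Fin n → ℝ}
    (hx : x ∈ U) : ContDiff ℝ 2 (fun q => Φ (x, q)) :=
  hΦ.comp_contDiff (contDiff_const.prodMk contDiff_id) fun _ => ⟨hx, trivial⟩

lemma pdM_slice_eq_fderiv {x : Fin n → ℝ} {P : Fin a → Fin b → ℝ}
    (hΦ : DifferentiableAt ℝ Φ (x, P)) (A : Fin a) (K : Fin b) :
    pdM (fun q => Φ (x, q)) A K P = fderiv ℝ Φ (x, P) (0, unitMat A K) :=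
  (hΦ.hasFDerivAt.comp P (hasFDerivAt_prodMk_right x P)).pdM_eq A K

lemma differentiableAt_pdM_slice (hU : IsOpen U) (hΦ : ContDiffOn ℝ 2 Φ (U ×ˢ Set.univ))
    {x : Fin n → ℝ} (hx : x ∈ U) (A : Fin a) (K : Fin b) (P : Fin a → Fin b → ℝ) :
    DifferentiableAt ℝ (fun x' => pdM (fun q => Φ (x', q)) A K P) x := by
  have hopen : IsOpen (U ×ˢ (Set.univ : Set (Fin a → Fin b → ℝ))) := hU.prod isOpen_univ
  have hΦat : ∀ x' ∈ U, ContDiffAt ℝ 2 Φ (x', P) := fun x' hx' =>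
    hΦ.contDiffAt (hopen.mem_nhds ⟨hx', trivial⟩)
  have heq : (fun x' => pdM (fun q => Φ (x', q)) A K P) =ᶠ[𝓝 x]
      fun x' => fderiv ℝ Φ (x', P) (0, unitMat A K) := by
    filter_upwards [hU.mem_nhds hx] with x' hx'
    exact pdM_slice_eq_fderiv ((hΦat x' hx').differentiableAt two_ne_zero) A K
  refine heq.differentiableAt_iff.mpr ?_
  have hfd : DifferentiableAt ℝ (fderiv ℝ Φ) (x, P) :=
    ((hΦat x hx).fderiv_right (m := 1) le_rfl).differentiableAt one_ne_zero
  exact (hfd.comp x (differentiableAt_id.prodMk (differentiableAt_const P))).clm_apply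
    (differentiableAt_const _)

lemma sum_pdV_pdM_slice_congr (hU : IsOpen U) (hΦ : ContDiffOn ℝ 2 Φ (U ×ˢ Set.univ))
    {x : Fin n → ℝ} (hx : x ∈ U) (A : Fin a) (i : Fin n) (w : Fin b → ℝ)
    {P₁ P₂ : Fin a → Fin b → ℝ}
    (heq : ∀ x' ∈ U, ∑ K, w K * pdM (fun q => Φ (x', q)) A K P₁ =
      ∑ K, w K * pdM (fun q => Φ (x', q)) A K P₂) :
    ∑ K, w K * pdV (fun x' => pdM (fun q => Φ (x', q)) A K P₁) i x =
      ∑ K, w K * pdV (fun x' => pdM (fun q => Φ (x', q)) A K P₂) i x := by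
  have hdiff := differentiableAt_pdM_slice hU hΦ hx A
  rw [← pdV_sum_mul _ _ (fun K _ => hdiff K P₁), ← pdV_sum_mul _ _ (fun K _ => hdiff K P₂)]
  have hnear : (fun x' => ∑ K, w K * pdM (fun q => Φ (x', q)) A K P₁) =ᶠ[𝓝 x]
      fun x' => ∑ K, w K * pdM (fun q => Φ (x', q)) A K P₂ :=
    Filter.eventually_of_mem (hU.mem_nhds hx) heq
  exact hnear.pdV_eq i

end Slices

lemma mmul_eq_rankOne_add_mmul_castSucc {n r k : ℕ} (a : Fin n → Fin (r + 1) → ℝ)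
    (what : Fin (r + 1) → Fin k → ℝ) :
    mmul a what = (fun B M => a B (Fin.last r) * what (Fin.last r) M) +
      mmul (fun B F => a B F.castSucc) (fun F => what F.castSucc) := by
  funext B M
  simp only [mmul, Pi.add_apply, Fin.sum_univ_castSucc]
  ring

namespace IsMixedForm

variable {n k r : ℕ} {U : Set (Fin n → ℝ)}
  {L : (Fin n → ℝ) → (Fin n → Fin k → ℝ) → (Fin r → Fin k → ℝ) → ℝ}

lemma contDiffOn_fixed_w (hL : IsMixedForm U L) (w : Fin r → Fin k → ℝ) :
    ContDiffOn ℝ 2 (fun z : (Fin n → ℝ) × (Fin n → Fin k → ℝ) => L z.1 z.2 w)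
      (U ×ˢ Set.univ) :=
  (hL.1.comp (contDiff_fst.prodMk (contDiff_snd.prodMk contDiff_const)).contDiffOn
    fun _ hz => ⟨hz.1, trivial⟩).of_le (WithTop.coe_le_coe.mpr le_top)

lemma fundEqs_fixed_w (hL : IsMixedForm U L) {x : Fin n → ℝ} (hx : x ∈ U)
    (w : Fin r → Fin k → ℝ) : FundEqs (fun q => L x q w) := by
  obtain ⟨-, -, -, -, hfund⟩ := hL
  simpa [Fin.append_left, Fin.append_right] using (hfund x hx).comp_append w

/-- Admissibility removes the part `a' w` of the shift, the fundamental equations the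
rank-one part `a_last ⊗ w'`. -/
lemma sum_pdM_add_mmul (hL : IsMixedForm U L) {x : Fin n → ℝ} (hx : x ∈ U) (A : Fin n)
    (p : Fin n → Fin k → ℝ) (what : Fin (r + 1) → Fin k → ℝ) (a : Fin n → Fin (r + 1) → ℝ) :
    ∑ K, what (Fin.last r) K *
        pdM (fun q => L x q (fun F => what F.castSucc)) A K (p + mmul a what) =
      ∑ K, what (Fin.last r) K * pdM (fun q => L x q (fun F => what F.castSucc)) A K p := by
  have hG := (hL.contDiffOn_fixed_w (fun F => what F.castSucc)).contDiff_slice hx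
  have hF := hL.fundEqs_fixed_w hx (fun F => what F.castSucc)
  obtain ⟨-, -, -, hadm, -⟩ := hL
  simp only [mmul_eq_rankOne_add_mmul_castSucc, ← add_assoc,
    pdM_add_of_forall_add_eq (f := fun q => L x q _) fun q => hadm x hx q _ _]
  exact hF.sum_pdM_add_rankOne hG A _ _ p

end IsMixedForm

/-- The differential `Δ𝓛` of an even mixed form `𝓛` of codegree
`k` and additional degree `r` on `U` is admissible:
`Δ𝓛(x, p + a·ŵ, ŵ) = Δ𝓛(x, p, ŵ)` for all `a ∈ Matrix(n×(r+1), ℝ)`. -/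
theorem statement_14 (n k r : ℕ) (U : Set (Fin n → ℝ)) (hU : IsOpen U)
    (L : (Fin n → ℝ) → (Fin n → Fin k → ℝ) → (Fin r → Fin k → ℝ) → ℝ)
    (hL : IsMixedForm U L) :
    ∀ x ∈ U, ∀ (p : Fin n → Fin k → ℝ) (what : Fin (r + 1) → Fin k → ℝ)
        (a : Fin n → Fin (r + 1) → ℝ),
      Dmix L x (p + mmul a what) what = Dmix L x p what := by
  intro x hx p what a
  unfold Dmix
  congr 1
  conv_lhs => rw [Finset.sum_comm]
  conv_rhs => rw [Finset.sum_comm]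
  refine Finset.sum_congr rfl fun A _ => ?_
  exact sum_pdV_pdM_slice_congr hU (hL.contDiffOn_fixed_w _) hx A A _
    fun x' hx' => hL.sum_pdM_add_mmul hx' A p what a
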